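/- For every P ∈ P_SI and every y ∈ ℝ, there exists a distribution Q ∈ E of (X, Y(1), Y(0), T) such that: (i) the joint law of (X, T) under Q equals that under P; (ii) the law of the observed data (X, T, Y), where Y := T·Y(1) + (1 − T)·Y(0), is the same under Q as under P; (iii) the conditional law of Y(1) given (X, T = 1) under Q equals that under P, and the conditional law of Y(0) given (X, T = 0) under Q equals that under P; and (iv) Y(1) − Y(0) = y holds Q-almost surely. (The construction takes, given (X, T = 0), the pair (Y(0) + y, Y(0)) with Y(0) drawn from P's conditional law of Y(0) given (X, T = 0), and given (X, T = 1), the pair (Y(1), Y(1) − y) with Y(1) drawn from P's conditional law of Y(1) given (X, T = 1).) -/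

import Mathlib

/-!
STATEMENT 0 (no-free-lunch for conditional independence testing, finite sample):
If a (possibly randomized) test `ψ : D^n → [0,1]` on the full data
`(X, Y(1), Y(0), T)` has level `α` over the strong-ignorability class `P_SI`,
then it has level `α` over the whole class `E`.
-/

open MeasureTheory ProbabilityTheory Filter

noncomputable section

/-- The full-data sample space `D = ℝ^p × ℝ² × {0,1}`. -/
abbrev FullData (p : ℕ) : Type := (Fin p → ℝ) × ℝ × ℝ × Bool

/-- Covariate coordinate. -/
def Xc {p : ℕ} (ω : FullData p) : Fin p → ℝ := ω.1

/-- Treated potential outcome coordinate `Y(1)`. -/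
def Y1c {p : ℕ} (ω : FullData p) : ℝ := ω.2.1

/-- Control potential outcome coordinate `Y(0)`. -/
def Y0c {p : ℕ} (ω : FullData p) : ℝ := ω.2.2.1

/-- Treatment coordinate `T`. -/
def Tc {p : ℕ} (ω : FullData p) : Bool := ω.2.2.2

lemma measurable_Xc {p : ℕ} : Measurable (Xc (p := p)) := measurable_fst

/-- The σ-algebra generated by the covariates `X`. -/
def mX (p : ℕ) : MeasurableSpace (FullData p) :=
  MeasurableSpace.comap Xc inferInstance

lemma mX_le (p : ℕ) : mX p ≤ (inferInstance : MeasurableSpace (FullData p)) := measurable_Xc.comap_le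

/-- The class `E`: distributions of `(X, Y(1), Y(0), T)` such that at least one coordinate
of `X` has a law absolutely continuous w.r.t. Lebesgue measure, and the laws of `Y(1)` and
`Y(0)` are atomless (continuous). -/
def memE {p : ℕ} (P : ProbabilityMeasure (FullData p)) : Prop :=
  (∃ j : Fin p,
    ((P : Measure (FullData p)).map (fun ω => Xc ω j)).AbsolutelyContinuous
      (volume : Measure ℝ)) ∧
  (∀ y : ℝ, ((P : Measure (FullData p)).map Y1c) {y} = 0) ∧
  (∀ y : ℝ, ((P : Measure (FullData p)).map Y0c) {y} = 0)

/-- The strong-ignorability class `P_SI ⊆ E`: `(Y(1), Y(0)) ⫫ T | X`. -/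
def memPSI {p : ℕ} (P : ProbabilityMeasure (FullData p)) : Prop :=
  memE P ∧
    CondIndepFun (mX p) (mX_le p) (fun ω => (Y1c ω, Y0c ω)) Tc
      (P : Measure (FullData p))


/-- The observed data of a unit: `(X, T, Y)` with `Y = T·Y(1) + (1 - T)·Y(0)`. -/
def obs {p : ℕ} (ω : FullData p) : (Fin p → ℝ) × Bool × ℝ :=
  (ω.1, ω.2.2.2, if ω.2.2.2 then ω.2.1 else ω.2.2.1)

/-- For every `P ∈ P_SI` and every `y ∈ ℝ` there exists `Q ∈ E` such that:
(i) the joint law of `(X, T)` is the same under `Q` and `P`;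
(ii) the law of the observed data `(X, T, Y)` with `Y = T·Y(1) + (1 − T)·Y(0)` is the same
under `Q` and `P`;
(iii) the conditional law of `Y(1)` given `(X, T = 1)` under `Q` equals that under `P`
(expressed, given (i), as the equality of the joint laws of `(X, Y(1))` on the event
`{T = 1}`), and symmetrically for `Y(0)` on `{T = 0}`;
(iv) `Y(1) − Y(0) = y` holds `Q`-almost surely. -/
theorem counterfactual_indistinguishable_construction {p : ℕ}
    (P : ProbabilityMeasure (FullData p)) (hP : memPSI P) (y : ℝ) :
    ∃ Q : ProbabilityMeasure (FullData p), memE Q ∧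
      (Q : Measure (FullData p)).map (fun ω => (Xc ω, Tc ω)) =
        (P : Measure (FullData p)).map (fun ω => (Xc ω, Tc ω)) ∧
      (Q : Measure (FullData p)).map obs = (P : Measure (FullData p)).map obs ∧
      ((Q : Measure (FullData p)).restrict {ω | Tc ω = true}).map
          (fun ω => (Xc ω, Y1c ω)) =
        ((P : Measure (FullData p)).restrict {ω | Tc ω = true}).map
          (fun ω => (Xc ω, Y1c ω)) ∧
      ((Q : Measure (FullData p)).restrict {ω | Tc ω = false}).map
          (fun ω => (Xc ω, Y0c ω)) =
        ((P : Measure (FullData p)).restrict {ω | Tc ω = false}).map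
          (fun ω => (Xc ω, Y0c ω)) ∧
      (∀ᵐ ω ∂(Q : Measure (FullData p)), Y1c ω - Y0c ω = y) := by
  classical
  set μ := (P : Measure (FullData p)) with hμ
  set φ : FullData p → FullData p := fun ω =>
    (ω.1, if ω.2.2.2 then (ω.2.1, ω.2.1 - y, true) else (ω.2.2.1 + y, ω.2.2.1, false)) with hφdef
  have hφ : Measurable φ := by
    apply measurable_fst.prodMk
    apply Measurable.ite
    · exact measurable_snd.snd.snd (measurableSet_singleton true)
    · exact measurable_snd.fst.prodMk
        ((measurable_snd.fst.sub measurable_const).prodMk measurable_const)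
    · exact (measurable_snd.snd.fst.add measurable_const).prodMk
        (measurable_snd.snd.fst.prodMk measurable_const)
  have hX : ∀ ω, Xc (φ ω) = Xc ω := by
    rintro ⟨x, y1, y0, t⟩; cases t <;> simp [φ, Xc]
  have hT : ∀ ω, Tc (φ ω) = Tc ω := by
    rintro ⟨x, y1, y0, t⟩; cases t <;> simp [φ, Tc]
  have hobs : ∀ ω, obs (φ ω) = obs ω := by
    rintro ⟨x, y1, y0, t⟩; cases t <;> simp [φ, obs]
  have hdiff : ∀ ω, Y1c (φ ω) - Y0c (φ ω) = y := by
    rintro ⟨x, y1, y0, t⟩; cases t <;> simp [φ, Y1c, Y0c]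
  have hY1 : ∀ ω, Tc ω = true → Y1c (φ ω) = Y1c ω := by
    rintro ⟨x, y1, y0, t⟩ ht; cases t <;> simp_all [φ, Y1c, Tc]
  have hY0 : ∀ ω, Tc ω = false → Y0c (φ ω) = Y0c ω := by
    rintro ⟨x, y1, y0, t⟩ ht; cases t <;> simp_all [φ, Y0c, Tc]
  have hY1meas : Measurable (Y1c (p := p)) := measurable_snd.fst
  have hY0meas : Measurable (Y0c (p := p)) := measurable_snd.snd.fst
  have hTmeas : Measurable (Tc (p := p)) := measurable_snd.snd.snd
  have hXmeas : Measurable (Xc (p := p)) := measurable_fst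
  have hQP : IsProbabilityMeasure (μ.map φ) := Measure.isProbabilityMeasure_map hφ.aemeasurable
  refine ⟨⟨μ.map φ, hQP⟩, ?_, ?_, ?_, ?_, ?_, ?_⟩
  · -- memE
    refine ⟨?_, ?_, ?_⟩
    · obtain ⟨j, hj⟩ := hP.1.1
      have hg : Measurable (fun ω : FullData p => Xc ω j) :=
        (measurable_pi_apply j).comp hXmeas
      have hmap : ((μ.map φ).map (fun ω => Xc ω j)) = μ.map (fun ω => Xc ω j) := by
        rw [Measure.map_map hg hφ]
        congr 1
      refine ⟨j, ?_⟩
      show ((μ.map φ).map (fun ω => Xc ω j)).AbsolutelyContinuous volume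
      exact hmap ▸ hj
    · intro a
      have h1 : ((μ.map φ).map Y1c) {a} = μ ((fun ω => Y1c (φ ω)) ⁻¹' {a}) := by
        rw [Measure.map_map hY1meas hφ,
          Measure.map_apply (hY1meas.comp hφ) (measurableSet_singleton a)]
        rfl
      have hsub : (fun ω => Y1c (φ ω)) ⁻¹' {a} ⊆
          (Y1c ⁻¹' {a}) ∪ (Y0c ⁻¹' {a - y}) := by
        rintro ⟨x, y1, y0, t⟩ hω
        cases t
        · right
          simp only [Set.mem_preimage, Set.mem_singleton_iff, φ, Y1c] at hω ⊢
          simp only [Y0c]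
          simp at hω
          linarith
        · left
          simpa [φ, Y1c] using hω
      have h2 : μ (Y1c ⁻¹' {a}) = 0 := by
        have := hP.1.2.1 a
        rwa [Measure.map_apply hY1meas (measurableSet_singleton a)] at this
      have h3 : μ (Y0c ⁻¹' {a - y}) = 0 := by
        have := hP.1.2.2 (a - y)
        rwa [Measure.map_apply hY0meas (measurableSet_singleton (a - y))] at this
      have : μ ((fun ω => Y1c (φ ω)) ⁻¹' {a}) = 0 :=
        le_antisymm (le_trans (measure_mono hsub)
          (le_trans (measure_union_le _ _) (by rw [h2, h3]; simp))) zero_le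
      show ((μ.map φ).map Y1c) {a} = 0
      rw [h1, this]
    · intro a
      have h1 : ((μ.map φ).map Y0c) {a} = μ ((fun ω => Y0c (φ ω)) ⁻¹' {a}) := by
        rw [Measure.map_map hY0meas hφ,
          Measure.map_apply (hY0meas.comp hφ) (measurableSet_singleton a)]
        rfl
      have hsub : (fun ω => Y0c (φ ω)) ⁻¹' {a} ⊆
          (Y0c ⁻¹' {a}) ∪ (Y1c ⁻¹' {a + y}) := by
        rintro ⟨x, y1, y0, t⟩ hω
        cases t
        · left
          simpa [φ, Y0c] using hω
        · right
          simp only [Set.mem_preimage, Set.mem_singleton_iff, φ, Y0c] at hω ⊢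
          simp only [Y1c]
          simp at hω
          linarith
      have h2 : μ (Y0c ⁻¹' {a}) = 0 := by
        have := hP.1.2.2 a
        rwa [Measure.map_apply hY0meas (measurableSet_singleton a)] at this
      have h3 : μ (Y1c ⁻¹' {a + y}) = 0 := by
        have := hP.1.2.1 (a + y)
        rwa [Measure.map_apply hY1meas (measurableSet_singleton (a + y))] at this
      have : μ ((fun ω => Y0c (φ ω)) ⁻¹' {a}) = 0 :=
        le_antisymm (le_trans (measure_mono hsub)
          (le_trans (measure_union_le _ _) (by rw [h2, h3]; simp))) zero_le
      show ((μ.map φ).map Y0c) {a} = 0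
      rw [h1, this]
  · -- (i)
    show (μ.map φ).map _ = _
    rw [Measure.map_map (hXmeas.prodMk hTmeas) hφ]
    congr 1; funext ω; simp [Function.comp, hX ω, hT ω]
  · -- (ii)
    show (μ.map φ).map obs = _
    have hobsm : Measurable (obs (p := p)) :=
      measurable_fst.prodMk (hTmeas.prodMk (Measurable.ite
        (hTmeas (measurableSet_singleton true)) measurable_snd.fst measurable_snd.snd.fst))
    rw [Measure.map_map hobsm hφ]
    congr 1; funext ω; simp [Function.comp, hobs ω]
  · -- (iii) T = true
    show ((μ.map φ).restrict {ω | Tc ω = true}).map _ = _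
    have hsmeas : MeasurableSet {ω : FullData p | Tc ω = true} :=
      hTmeas (measurableSet_singleton true)
    have hpre : φ ⁻¹' {ω : FullData p | Tc ω = true} = {ω | Tc ω = true} := by
      ext ω; simp [Set.mem_preimage, hT ω]
    rw [Measure.restrict_map hφ hsmeas, hpre,
      Measure.map_map (hXmeas.prodMk hY1meas) hφ]
    refine Measure.map_congr ?_
    refine (ae_restrict_iff' hsmeas).2 (ae_of_all _ fun ω hω => ?_)
    simp only [Function.comp]
    rw [hX ω, hY1 ω hω]
  · -- (iii) T = false
    show ((μ.map φ).restrict {ω | Tc ω = false}).map _ = _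
    have hsmeas : MeasurableSet {ω : FullData p | Tc ω = false} :=
      hTmeas (measurableSet_singleton false)
    have hpre : φ ⁻¹' {ω : FullData p | Tc ω = false} = {ω | Tc ω = false} := by
      ext ω; simp [Set.mem_preimage, hT ω]
    rw [Measure.restrict_map hφ hsmeas, hpre,
      Measure.map_map (hXmeas.prodMk hY0meas) hφ]
    refine Measure.map_congr ?_
    refine (ae_restrict_iff' hsmeas).2 (ae_of_all _ fun ω hω => ?_)
    simp only [Function.comp]
    rw [hX ω, hY0 ω hω]
  · -- (iv)
    show ∀ᵐ ω ∂(μ.map φ), Y1c ω - Y0c ω = y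
    have hmeas : MeasurableSet {ω : FullData p | Y1c ω - Y0c ω = y} :=
      (hY1meas.sub hY0meas) (measurableSet_singleton y)
    exact (MeasureTheory.ae_map_iff hφ.aemeasurable hmeas).2 (ae_of_all _ hdiff)


end
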